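/- arXiv:2004.03825 — 2 statements merged into one kernel-verified Lean document; each statement's English description precedes it below -/
import Mathlib

section
/- Let p be monic strictly hyperbolic of degree m, q a hyperbolic polynomial of degree m-1 with positive leading coefficient which separates (interlaces) p, and r any polynomial of degree at most m-1. Then there is a constant C > 0 such that C·ĥ_{p,q}(z,z̄) ≥ |r̂(z)|² for all z ∈ ℂ^m. -/
/-!
Expanding `q` in the Lagrange basis `Lₖ` at the roots `λₖ` of `p` diagonalises the Bezoutian:
`p(x) q(y) - p(y) q(x) = (x - y) ∑ₖ wₖ Lₖ(x) Lₖ(y)` with `wₖ = q(λₖ) p'(λₖ)`. When `q` interlaces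
`p`, the values `q(λₖ)` and `p'(λₖ)` have the same sign, so every `wₖ > 0` and
`ĥ_{p,q}(z, z̄) = ∑ₖ wₖ |L̂ₖ(z)|²`. Since `r̂ = ∑ₖ r(λₖ) L̂ₖ`, Cauchy–Schwarz gives
`|r̂(z)|² ≤ (∑ₖ r(λₖ)² / wₖ) ĥ_{p,q}(z, z̄)`.
-/

open Polynomial Finset ComplexConjugate

theorem Fin.eq_of_forall_sum_mul_pow_eq {R : Type*} [CommRing R] [IsDomain R] {n : ℕ}
    {a b : Fin n → R} {S : Set R} (hS : S.Infinite)
    (h : ∀ x ∈ S, ∑ i, a i * x ^ (i : ℕ) = ∑ i, b i * x ^ (i : ℕ)) : a = b := by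
  have hP : ∑ i, C (a i) * X ^ (i : ℕ) = ∑ i, C (b i) * X ^ (i : ℕ) :=
    eq_of_infinite_eval_eq _ _ <| hS.mono fun x hx => by simpa [eval_finsetSum] using h x hx
  funext i
  simpa [finsetSum_coeff, coeff_C_mul_X_pow, Fin.val_inj] using congrArg (coeff · i) hP

theorem Fin.eq_of_forall_sub_mul_sum_mul_pow_eq {R : Type*} [CommRing R] [IsDomain R]
    [Infinite R] {n : ℕ} {a b : Fin n → Fin n → R}
    (h : ∀ x y, (x - y) * ∑ i, ∑ j, a i j * x ^ (i : ℕ) * y ^ (j : ℕ)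
      = (x - y) * ∑ i, ∑ j, b i j * x ^ (i : ℕ) * y ^ (j : ℕ)) : a = b := by
  have regroup : ∀ (c : Fin n → Fin n → R) (x y : R),
      ∑ i, (∑ j, c i j * y ^ (j : ℕ)) * x ^ (i : ℕ)
        = ∑ i, ∑ j, c i j * x ^ (i : ℕ) * y ^ (j : ℕ) := fun c x y =>
    sum_congr rfl fun i _ => by rw [sum_mul]; exact sum_congr rfl fun j _ => by ring
  have hrow : ∀ y, (fun i => ∑ j, a i j * y ^ (j : ℕ)) = fun i => ∑ j, b i j * y ^ (j : ℕ) :=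
    fun y => Fin.eq_of_forall_sum_mul_pow_eq (Set.finite_singleton y).infinite_compl
      fun x hx => by
        rw [regroup, regroup]
        exact mul_left_cancel₀ (sub_ne_zero.mpr hx) (h x y)
  funext i
  exact Fin.eq_of_forall_sum_mul_pow_eq Set.infinite_univ fun y _ => congrFun (hrow y) i

theorem Polynomial.eval_eq_sum_fin {R : Type*} [CommSemiring R] {n : ℕ} {f : R[X]}
    (hf : f.natDegree < n) (x : R) : f.eval x = ∑ i : Fin n, f.coeff i * x ^ (i : ℕ) := by
  rw [eval_eq_sum_range' hf, Fin.sum_univ_eq_sum_range (fun i => f.coeff i * x ^ i)]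

theorem Polynomial.coeff_matrix_eq_of_sub_mul_eq {F ι : Type*} [Field F] [Infinite F] [Fintype ι]
    {n : ℕ} (h : Fin n → Fin n → F) (w : ι → F) (L : ι → F[X]) (hL : ∀ k, (L k).natDegree < n)
    (hh : ∀ x y, (x - y) * ∑ i, ∑ j, h i j * x ^ (i : ℕ) * y ^ (j : ℕ)
      = (x - y) * ∑ k, w k * (L k).eval x * (L k).eval y) :
    h = fun i j : Fin n => ∑ k, w k * ((L k).coeff i * (L k).coeff j) := by
  refine Fin.eq_of_forall_sub_mul_sum_mul_pow_eq fun x y => ?_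
  rw [hh]
  congr 1
  symm
  simp_rw [eval_eq_sum_fin (hL _), mul_assoc, sum_mul_sum, mul_sum, sum_mul]
  rw [sum_comm_cycle]
  exact sum_congr rfl fun k _ => sum_congr rfl fun i _ => sum_congr rfl fun j _ => by ring

theorem Lagrange.eval_nodal_eq_mul_eval_basis {F ι : Type*} [Field F] [DecidableEq ι]
    {s : Finset ι} {v : ι → F} {i : ι} (hvs : Set.InjOn v s) (hi : i ∈ s) (x : F) :
    (nodal s v).eval x = (nodalWeight s v i)⁻¹ * (x - v i) * (Lagrange.basis s v i).eval x := by
  rw [basis_eq_prod_sub_inv_mul_nodal_div hi, ← nodal_erase_eq_nodal_div hi,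
    nodal_eq_mul_nodal_erase hi, eval_mul, eval_mul, eval_C, eval_sub, eval_X, eval_C]
  field_simp [nodalWeight_ne_zero hvs hi]

theorem Lagrange.eval_nodal_mul_eval_sub_eval_nodal_mul_eval {F ι : Type*} [Field F]
    [DecidableEq ι] {s : Finset ι} {v : ι → F} (hvs : Set.InjOn v s) {q : F[X]}
    (hq : q.degree < #s) (x y : F) :
    (nodal s v).eval x * q.eval y - (nodal s v).eval y * q.eval x
      = (x - y) * ∑ i ∈ s, q.eval (v i) / nodalWeight s v i
          * (Lagrange.basis s v i).eval x * (Lagrange.basis s v i).eval y := by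
  have hq_eval : ∀ t, q.eval t = ∑ i ∈ s, q.eval (v i) * (Lagrange.basis s v i).eval t := by
    intro t
    conv_lhs => rw [eq_interpolate hvs hq]
    simp [interpolate_apply, eval_finsetSum]
  rw [hq_eval x, hq_eval y, mul_sum, mul_sum, mul_sum, ← sum_sub_distrib]
  refine sum_congr rfl fun i hi => ?_
  rw [eval_nodal_eq_mul_eval_basis hvs hi x, eval_nodal_eq_mul_eval_basis hvs hi y]
  ring

theorem Lagrange.coeff_eq_sum_eval_mul_coeff_basis {F ι : Type*} [Field F] [DecidableEq ι]
    {s : Finset ι} {v : ι → F} (hvs : Set.InjOn v s) {f : F[X]} (hf : f.degree < #s) (n : ℕ) :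
    f.coeff n = ∑ i ∈ s, f.eval (v i) * (Lagrange.basis s v i).coeff n := by
  conv_lhs => rw [eq_interpolate hvs hf]
  simp [interpolate_apply, finsetSum_coeff]

theorem Fin.prod_univ_erase_eq_prod_succAbove {M : Type*} [CommMonoid M] {n : ℕ}
    (f : Fin (n + 1) → M) (k : Fin (n + 1)) :
    ∏ j ∈ univ.erase k, f j = ∏ j : Fin n, f (k.succAbove j) := by
  rw [Fin.univ_succAbove n k, erase_cons, prod_map, Fin.coe_succAboveEmb]

/-- Pair `μⱼ` with the root `λ_{k.succAbove j}` lying on the same side of `λₖ`. -/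
theorem interlacing_sub_mul_sub_pos {m : ℕ} {lam : Fin (m + 1) → ℝ} (hlam : StrictMono lam)
    {mu : Fin m → ℝ} (hint : ∀ k : Fin m, lam k.castSucc < mu k ∧ mu k < lam k.succ)
    (k : Fin (m + 1)) (j : Fin m) : 0 < (lam k - mu j) * (lam k - lam (k.succAbove j)) := by
  rcases lt_or_ge j.castSucc k with hjk | hkj
  · rw [Fin.succAbove_of_castSucc_lt _ _ hjk]
    have hmu : mu j < lam k :=
      (hint j).2.trans_le (hlam.monotone (Fin.castSucc_lt_iff_succ_le.mp hjk))
    nlinarith [hlam hjk]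
  · rw [Fin.succAbove_of_le_castSucc _ _ hkj]
    have hmu : lam k < mu j := (hlam.monotone hkj).trans_lt (hint j).1
    nlinarith [hlam (hkj.trans_lt j.castSucc_lt_succ)]

theorem eval_div_nodalWeight_pos_of_interlacing {m : ℕ} {lam : Fin (m + 1) → ℝ}
    (hlam : StrictMono lam) {mu : Fin m → ℝ}
    (hint : ∀ k : Fin m, lam k.castSucc < mu k ∧ mu k < lam k.succ) {c : ℝ} (hc : 0 < c)
    (k : Fin (m + 1)) :
    0 < (C c * Lagrange.nodal univ mu).eval (lam k) / Lagrange.nodalWeight univ lam k := by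
  rw [eval_mul, eval_C, Lagrange.nodalWeight_eq_eval_nodal_erase_inv, div_inv_eq_mul, mul_assoc,
    Lagrange.eval_nodal, Lagrange.eval_nodal,
    Fin.prod_univ_erase_eq_prod_succAbove (fun j => lam k - lam j), ← prod_mul_distrib]
  exact mul_pos hc (prod_pos fun j _ => interlacing_sub_mul_sub_pos hlam hint k j)

theorem Complex.sum_sum_mul_conj_eq_sum_mul_normSq {ι κ : Type*} [Fintype ι] [Fintype κ]
    (w : κ → ℝ) (a : κ → ι → ℝ) (z : ι → ℂ) :
    ∑ i, ∑ j, ((∑ k, w k * (a k i * a k j) : ℝ) : ℂ) * z i * conj (z j)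
      = ((∑ k, w k * Complex.normSq (∑ i, a k i * z i) : ℝ) : ℂ) := by
  push_cast
  simp_rw [← Complex.mul_conj, map_sum, map_mul, Complex.conj_ofReal, sum_mul_sum, mul_sum,
    sum_mul]
  rw [sum_comm_cycle]
  exact sum_congr rfl fun k _ => sum_congr rfl fun i _ => sum_congr rfl fun j _ => by ring

theorem Complex.sum_ofReal_sum_mul_mul_eq {ι κ : Type*} [Fintype ι] [Fintype κ]
    (β : κ → ℝ) (a : κ → ι → ℝ) (z : ι → ℂ) :
    ∑ i, ((∑ k, β k * a k i : ℝ) : ℂ) * z i = ∑ k, (β k : ℂ) * ∑ i, a k i * z i := by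
  push_cast
  simp_rw [sum_mul, mul_sum]
  rw [sum_comm]
  exact sum_congr rfl fun k _ => sum_congr rfl fun i _ => by ring

theorem Complex.sq_norm_sum_ofReal_mul_le {ι : Type*} (s : Finset ι) (β w : ι → ℝ)
    (hw : ∀ k ∈ s, 0 < w k) (Φ : ι → ℂ) :
    ‖∑ k ∈ s, (β k : ℂ) * Φ k‖ ^ 2
      ≤ (∑ k ∈ s, β k ^ 2 / w k) * ∑ k ∈ s, w k * Complex.normSq (Φ k) := by
  calc ‖∑ k ∈ s, (β k : ℂ) * Φ k‖ ^ 2 ≤ (∑ k ∈ s, |β k| * ‖Φ k‖) ^ 2 := by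
        gcongr
        exact (norm_sum_le _ _).trans_eq (by simp)
    _ ≤ _ := sum_sq_le_sum_mul_sum_of_sq_le_mul s
        (fun k hk => div_nonneg (sq_nonneg _) (hw k hk).le)
        (fun k hk => mul_nonneg (hw k hk).le (Complex.normSq_nonneg _)) fun k hk =>
          le_of_eq <| by
            rw [Complex.normSq_eq_norm_sq, mul_pow, sq_abs]
            field_simp [(hw k hk).ne']

/-- If `p` (degree `m+1`) is strictly hyperbolic and `q` separates `p`, then for any
polynomial `r` of degree at most `m` there is `C > 0` with
`|r̂(z)|² ≤ C · ĥ_{p,q}(z,z̄)` for all `z ∈ ℂ^{m+1}`. -/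
theorem bezout_form_dominates_linear_forms (m : ℕ) (lam : Fin (m + 1) → ℝ)
    (hlam : StrictMono lam) (mu : Fin m → ℝ) (c : ℝ) (hc : 0 < c)
    (hint : ∀ k : Fin m, lam k.castSucc < mu k ∧ mu k < lam k.succ)
    (p q : Polynomial ℝ)
    (hp : p = ∏ j, (X - C (lam j)))
    (hq : q = C c * ∏ j, (X - C (mu j)))
    (r : Polynomial ℝ) (hr : r.natDegree ≤ m)
    (h : Fin (m + 1) → Fin (m + 1) → ℝ)
    (hh : ∀ x y : ℝ,
      (x - y) * ∑ i : Fin (m + 1), ∑ j : Fin (m + 1), h i j * x ^ (i : ℕ) * y ^ (j : ℕ)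
        = p.eval x * q.eval y - p.eval y * q.eval x) :
    ∃ C > 0, ∀ z : Fin (m + 1) → ℂ,
      ‖∑ i : Fin (m + 1), (r.coeff i : ℂ) * z i‖ ^ 2
        ≤ C * (∑ i : Fin (m + 1), ∑ j : Fin (m + 1),
            (h i j : ℂ) * z i * (starRingEnd ℂ) (z j)).re := by
  rw [← Lagrange.nodal_eq] at hp hq
  have hinj : Set.InjOn lam (univ : Finset (Fin (m + 1))) := hlam.injective.injOn
  have hdeg : ∀ f : ℝ[X], f.natDegree ≤ m → f.degree < #(univ : Finset (Fin (m + 1))) :=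
    fun f hf => (degree_le_of_natDegree_le hf).trans_lt (by
      simp only [card_univ, Fintype.card_fin]; exact_mod_cast m.lt_succ_self)
  set L : Fin (m + 1) → ℝ[X] := Lagrange.basis univ lam
  set w : Fin (m + 1) → ℝ := fun k => q.eval (lam k) / Lagrange.nodalWeight univ lam k
  have hw : ∀ k, 0 < w k := fun k => by
    simpa only [w, hq] using eval_div_nodalWeight_pos_of_interlacing hlam hint hc k
  have hq_deg : q.natDegree ≤ m := by
    rw [hq]
    exact (natDegree_C_mul_le _ _).trans (by simp [Lagrange.natDegree_nodal])
  have hh_coeff := Polynomial.coeff_matrix_eq_of_sub_mul_eq h w L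
    (fun k => by simp [L, Lagrange.natDegree_basis hinj (mem_univ k)]) fun x y => by
      rw [hh, hp, Lagrange.eval_nodal_mul_eval_sub_eval_nodal_mul_eval hinj (hdeg q hq_deg)]
  set β : Fin (m + 1) → ℝ := fun k => r.eval (lam k)
  have hr_coeff : ∀ i : Fin (m + 1), r.coeff i = ∑ k, β k * (L k).coeff i :=
    fun i => Lagrange.coeff_eq_sum_eval_mul_coeff_basis hinj (hdeg r hr) i
  refine ⟨∑ k, β k ^ 2 / w k + 1, add_pos_of_nonneg_of_pos
    (sum_nonneg fun k _ => div_nonneg (sq_nonneg _) (hw k).le) one_pos, fun z => ?_⟩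
  simp_rw [hr_coeff]
  rw [Complex.sum_ofReal_sum_mul_mul_eq, hh_coeff, Complex.sum_sum_mul_conj_eq_sum_mul_normSq,
    Complex.ofReal_re]
  refine (Complex.sq_norm_sum_ofReal_mul_le _ _ _ (fun k _ => hw k) _).trans ?_
  exact mul_le_mul_of_nonneg_right (le_add_of_nonneg_right zero_le_one)
    (sum_nonneg fun k _ => mul_nonneg (hw k).le (Complex.normSq_nonneg _))
end

section
/- Let p(ζ) = ∏_{j=1}^s (ζ - λ_{(j)})^{r_j} with distinct real λ_{(j)}, and let q(ζ) = b(ζ)∏_{j=1}^s (ζ - λ_{(j)})^{r_j-1} where b(ζ) = ∏_{j=1}^{s-1}(ζ - μⱼ) with λ_{(1)} < μ₁ < ⋯ < μ_{s-1} < λ_{(s)}. Then the Bézoutian of p and q equals h_{p,q}(ζ,ζ̄) = Σ_{k=1}^s αₖ φₖ(ζ)φₖ(ζ̄), where φₖ(ζ) = ∏_{j=1}^s (ζ - λ_{(j)})^{r_j - δ_{kj}} and αₖ = b(λ_{(k)})/∏_{j≠k}(λ_{(k)} - λ_{(j)}) > 0. -/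
/-!
Both `p` and `q` carry the factor `m = ∏ (ζ - λⱼ)^(rⱼ - 1)`, which comes out of the Bézoutian
as `m(x) m(y)`; what remains is the Bézoutian of the nodal polynomial `w = ∏ (ζ - λⱼ)` and `b`.
As `deg b < s`, Lagrange interpolation at the nodes `λⱼ` gives `b = ∑ αₖ wₖ` with
`wₖ = w / (ζ - λₖ)`, and each term contributes `w(x) wₖ(y) - w(y) wₖ(x) = (x - y) wₖ(x) wₖ(y)`.
For the sign, `αₖ = ∏ᵢ (λₖ - μᵢ) / (λₖ - λ_{k.succAbove i})`, and interlacing puts `μᵢ` and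
`λ_{k.succAbove i}` on the same side of `λₖ`.
-/

open Polynomial Finset

theorem Fin.prod_erase_eq_prod_succAbove {M : Type*} [CommMonoid M] {n : ℕ} (f : Fin (n + 1) → M)
    (k : Fin (n + 1)) : ∏ j ∈ univ.erase k, f j = ∏ i : Fin n, f (k.succAbove i) := by
  have hrange : univ.erase k = univ.map k.succAboveEmb := by
    ext j
    simp [Fin.exists_succAbove_eq_iff]
  rw [hrange, prod_map]
  rfl

theorem Finset.prod_pow_eq_prod_pow_pred_mul_prod {ι M : Type*} [CommMonoid M] {s : Finset ι}
    (a : ι → M) {r : ι → ℕ} (hr : ∀ j ∈ s, 1 ≤ r j) :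
    ∏ j ∈ s, a j ^ r j = (∏ j ∈ s, a j ^ (r j - 1)) * ∏ j ∈ s, a j := by
  rw [← prod_mul_distrib]
  refine prod_congr rfl fun j hj => ?_
  rw [← pow_succ, Nat.sub_add_cancel (hr j hj)]

theorem Finset.prod_pow_sub_ite_eq {ι M : Type*} [CommMonoid M] [DecidableEq ι] {s : Finset ι}
    (a : ι → M) {r : ι → ℕ} (hr : ∀ j ∈ s, 1 ≤ r j) {k : ι} (hk : k ∈ s) :
    ∏ j ∈ s, a j ^ (r j - if k = j then 1 else 0)
      = (∏ j ∈ s, a j ^ (r j - 1)) * ∏ j ∈ s.erase k, a j := by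
  have hr' : ∀ j ∈ s.erase k, 1 ≤ r j := fun j hj => hr j (mem_of_mem_erase hj)
  have hne : ∀ j ∈ s.erase k, (r j - if k = j then 1 else 0) = r j := fun j hj => by
    rw [if_neg (ne_of_mem_erase hj).symm, Nat.sub_zero]
  rw [← mul_prod_erase s _ hk, ← mul_prod_erase s _ hk, prod_congr rfl fun j hj => by rw [hne j hj],
    prod_pow_eq_prod_pow_pred_mul_prod a hr', if_pos rfl, mul_assoc]

theorem Lagrange.eq_sum_C_mul_nodal_erase {F ι : Type*} [Field F] [DecidableEq ι] {s : Finset ι}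
    {v : ι → F} (hvs : Set.InjOn v s) {f : F[X]} (hf : f.degree < #s) :
    f = ∑ i ∈ s, C (f.eval (v i) * nodalWeight s v i) * nodal (s.erase i) v := by
  conv_lhs => rw [eq_interpolate hvs hf, interpolate_eq_nodalWeight_mul_nodal_div_X_sub_C]
  refine sum_congr rfl fun i hi => ?_
  rw [nodal_erase_eq_nodal_div hi, C_mul]
  ring

theorem Lagrange.bezout_nodal_sum_nodal_erase {R ι : Type*} [CommRing R] [DecidableEq ι]
    (s : Finset ι) (v c : ι → R) (x y : R) :
    (nodal s v).eval x * (∑ i ∈ s, C (c i) * nodal (s.erase i) v).eval y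
        - (nodal s v).eval y * (∑ i ∈ s, C (c i) * nodal (s.erase i) v).eval x
      = (x - y) * ∑ i ∈ s, c i * ((nodal (s.erase i) v).eval x * (nodal (s.erase i) v).eval y) := by
  simp only [eval_finsetSum, eval_mul, eval_C, mul_sum, ← sum_sub_distrib]
  refine sum_congr rfl fun i hi => ?_
  rw [nodal_eq_mul_nodal_erase hi]
  simp only [eval_mul, eval_sub, eval_X, eval_C]
  ring

theorem StrictMono.div_prod_erase_pos_of_interlace {t : ℕ} {lam : Fin (t + 1) → ℝ}
    (hlam : StrictMono lam) {mu : Fin t → ℝ}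
    (hint : ∀ j : Fin t, lam j.castSucc < mu j ∧ mu j < lam j.succ) (k : Fin (t + 1)) :
    0 < (∏ i, (lam k - mu i)) / ∏ j ∈ univ.erase k, (lam k - lam j) := by
  rw [Fin.prod_erase_eq_prod_succAbove, ← prod_div_distrib]
  refine prod_pos fun i _ => ?_
  obtain ⟨hlo, hhi⟩ := hint i
  rcases lt_or_ge i.castSucc k with hik | hki
  · rw [Fin.succAbove_of_castSucc_lt _ _ hik]
    have : lam i.succ ≤ lam k := hlam.monotone (Fin.castSucc_lt_iff_succ_le.mp hik)
    exact div_pos (by linarith) (by linarith [hlam hik])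
  · rw [Fin.succAbove_of_le_castSucc _ _ hki]
    have : lam k ≤ lam i.castSucc := hlam.monotone hki
    exact div_pos_of_neg_of_neg (by linarith) (by linarith [hlam (Fin.le_castSucc_iff.mp hki)])

/-- Explicit expansion of the Bézoutian for `p = ∏(ζ-λ_{(j)})^{r_j}` and the separating
`q = b · ∏(ζ-λ_{(j)})^{r_j-1}`: `h_{p,q}(ζ,η) = Σₖ αₖ φₖ(ζ)φₖ(η)` with
`φₖ(ζ) = ∏ (ζ-λ_{(j)})^{r_j - δ_{kj}}` and `αₖ = b(λ_{(k)})/∏_{j≠k}(λ_{(k)}-λ_{(j)}) > 0`. -/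
theorem bezoutian_expansion_general (t : ℕ) (lam : Fin (t + 1) → ℝ)
    (hlam : StrictMono lam)
    (r : Fin (t + 1) → ℕ) (hr : ∀ j, 1 ≤ r j)
    (mu : Fin t → ℝ) (hint : ∀ j : Fin t, lam j.castSucc < mu j ∧ mu j < lam j.succ)
    (b p q : Polynomial ℝ)
    (hb : b = ∏ j, (X - C (mu j)))
    (hp : p = ∏ j, (X - C (lam j)) ^ (r j))
    (hq : q = b * ∏ j, (X - C (lam j)) ^ (r j - 1))
    (α : Fin (t + 1) → ℝ)
    (hα : ∀ k, α k = b.eval (lam k) / ∏ j ∈ Finset.univ.erase k, (lam k - lam j)) :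
    (∀ k, 0 < α k) ∧
    ∀ x y : ℝ, p.eval x * q.eval y - p.eval y * q.eval x
      = (x - y) * ∑ k : Fin (t + 1), α k *
          ((∏ j, (x - lam j) ^ (r j - if k = j then 1 else 0)) *
            (∏ j, (y - lam j) ^ (r j - if k = j then 1 else 0))) := by
  have hb_eval : ∀ z, b.eval z = ∏ i, (z - mu i) := by simp [hb, eval_prod]
  refine ⟨fun k => ?_, fun x y => ?_⟩
  · rw [hα k, hb_eval]
    exact hlam.div_prod_erase_pos_of_interlace hint k
  set m : ℝ[X] := ∏ j, (X - C (lam j)) ^ (r j - 1)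
  have hr' : ∀ j ∈ univ, 1 ≤ r j := fun j _ => hr j
  have hp' : p = m * Lagrange.nodal univ lam := by
    rw [hp, prod_pow_eq_prod_pow_pred_mul_prod _ hr', Lagrange.nodal]
  have hb' : b = ∑ k, C (α k) * Lagrange.nodal (univ.erase k) lam := by
    have hdeg : b.degree < #(univ : Finset (Fin (t + 1))) := by
      rw [hb, ← Lagrange.nodal, Lagrange.degree_nodal, card_univ, card_univ, Fintype.card_fin,
        Fintype.card_fin]
      exact_mod_cast t.lt_succ_self
    conv_lhs => rw [Lagrange.eq_sum_C_mul_nodal_erase hlam.injective.injOn hdeg]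
    simp only [hα, Lagrange.nodalWeight, prod_inv_distrib, div_eq_mul_inv]
  have hφ : ∀ k z, ∏ j, (z - lam j) ^ (r j - if k = j then 1 else 0)
      = m.eval z * (Lagrange.nodal (univ.erase k) lam).eval z := fun k z => by
    rw [prod_pow_sub_ite_eq _ hr' (mem_univ k), Lagrange.eval_nodal]
    simp [m, eval_prod]
  have hbezout := Lagrange.bezout_nodal_sum_nodal_erase univ lam α x y
  rw [← hb'] at hbezout
  have hsum : ∑ k, α k * ((∏ j, (x - lam j) ^ (r j - if k = j then 1 else 0)) *
      (∏ j, (y - lam j) ^ (r j - if k = j then 1 else 0))) = m.eval x * m.eval y *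
        ∑ k, α k * ((Lagrange.nodal (univ.erase k) lam).eval x *
          (Lagrange.nodal (univ.erase k) lam).eval y) := by
    rw [mul_sum]
    exact sum_congr rfl fun k _ => by rw [hφ, hφ]; ring
  rw [hsum, hp', hq]
  simp only [eval_mul]
  linear_combination m.eval x * m.eval y * hbezout
end
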